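/- arXiv:2009.13157 — 10 statements merged into one kernel-verified Lean document; each statement's English description precedes it below -/
import Mathlib

section
/- Let (X,d) be a complete metric space and T : X → X be a Meir-Keeler contraction. Then T is a Picard operator. -/
/-!
A Meir-Keeler map is contractive, so the distances `d(Tⁿx, Tⁿy)` decrease to some `r`; if
`r > 0`, then once they lie in `[r, r + δ)` the next one drops below `r`, so `r = 0`.
For the orbit of `x` to be Cauchy, take `δ` for `ε` and `N` with `d(T^{N+1}x, T^N x) < η`,
`η = min δ ε`: the ball of radius `ε + η` about `T^N x` is `T`-invariant, because `T` maps
it within `ε` of `T^{N+1}x` (nonexpansiveness inside radius `ε`, the Meir-Keeler condition on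
the shell `[ε, ε + δ)`), so the tail of the orbit stays within `2ε` of
`T^N x`. The limit is a fixed point by continuity, unique by contractivity, and attracts every
orbit since `d(Tⁿx, Tⁿu) → 0`.
-/

open Filter Topology

/-- `T` is a Picard operator: it has a unique fixed point `u` and every
sequence of iterates converges to `u`. -/
def IsPicardOperator {X : Type*} [MetricSpace X] (T : X → X) : Prop :=
  ∃ u : X, T u = u ∧ (∀ v : X, T v = v → v = u) ∧
    ∀ x : X, Tendsto (fun n => T^[n] x) atTop (𝓝 u)

/-- `T` is contractive: `d(Tx,Ty) < d(x,y)` whenever `x ≠ y`. -/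
def Contractive {X : Type*} [MetricSpace X] (T : X → X) : Prop :=
  ∀ x y : X, x ≠ y → dist (T x) (T y) < dist x y

/-- The Matkowski–Węgrzyk condition. -/
def MWCondition {X : Type*} [MetricSpace X] (T : X → X) : Prop :=
  ∀ ε > (0 : ℝ), ∃ δ > (0 : ℝ), ∀ x y : X,
    ε < dist x y → dist x y < ε + δ → dist (T x) (T y) ≤ ε

/-- `T` is a CJMP-contraction. -/
def IsCJMP {X : Type*} [MetricSpace X] (T : X → X) : Prop :=
  Contractive T ∧ MWCondition T

def IsMeirKeeler {X : Type*} [MetricSpace X] (T : X → X) : Prop :=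
  ∀ ε > (0 : ℝ), ∃ δ > (0 : ℝ), ∀ x y : X,
    ε ≤ dist x y → dist x y < ε + δ → dist (T x) (T y) < ε

open Function

namespace IsMeirKeeler

variable {X : Type*} [MetricSpace X] {T : X → X}

theorem dist_lt (hT : IsMeirKeeler T) {x y : X} (hxy : x ≠ y) :
    dist (T x) (T y) < dist x y := by
  obtain ⟨δ, hδ, h⟩ := hT _ (dist_pos.2 hxy)
  exact h x y le_rfl (lt_add_of_pos_right _ hδ)

theorem dist_le (hT : IsMeirKeeler T) (x y : X) : dist (T x) (T y) ≤ dist x y := by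
  rcases eq_or_ne x y with rfl | hxy
  · simp
  · exact (hT.dist_lt hxy).le

theorem lipschitzWith_one (hT : IsMeirKeeler T) : LipschitzWith 1 T :=
  LipschitzWith.of_dist_le_mul fun x y => by simpa using hT.dist_le x y

theorem eq_of_isFixedPt (hT : IsMeirKeeler T) {x y : X} (hx : IsFixedPt T x)
    (hy : IsFixedPt T y) : x = y := by
  by_contra hxy
  have h := hT.dist_lt hxy
  rw [hx, hy] at h
  exact h.false

theorem tendsto_dist_iterate (hT : IsMeirKeeler T) (x y : X) :
    Tendsto (fun n => dist (T^[n] x) (T^[n] y)) atTop (𝓝 0) := by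
  set a : ℕ → ℝ := fun n => dist (T^[n] x) (T^[n] y)
  have ha_succ (n : ℕ) : a (n + 1) = dist (T (T^[n] x)) (T (T^[n] y)) := by
    simp only [a, iterate_succ_apply']
  have hanti : Antitone a := antitone_nat_of_succ_le fun n =>
    (ha_succ n).trans_le (hT.dist_le _ _)
  have hbdd : BddBelow (Set.range a) := ⟨0, by rintro _ ⟨n, rfl⟩; exact dist_nonneg⟩
  have hlim := tendsto_atTop_ciInf hanti hbdd
  suffices hr : ⨅ n, a n = 0 by rwa [hr] at hlim
  by_contra hne
  have hr : 0 < ⨅ n, a n := (le_ciInf fun n => (dist_nonneg : 0 ≤ a n)).lt_of_ne' hne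
  obtain ⟨δ, hδ, h⟩ := hT _ hr
  obtain ⟨n, hn⟩ := exists_lt_of_ciInf_lt (lt_add_of_pos_right (⨅ n, a n) hδ)
  have hdrop := h _ _ (ciInf_le hbdd n) hn
  rw [← ha_succ] at hdrop
  exact hdrop.not_ge (ciInf_le hbdd (n + 1))

theorem tendsto_iterate_of_isFixedPt (hT : IsMeirKeeler T) {u : X} (hu : IsFixedPt T u)
    (x : X) : Tendsto (fun n => T^[n] x) atTop (𝓝 u) := by
  have h := hT.tendsto_dist_iterate x u
  simp only [iterate_fixed hu] at h
  exact tendsto_iff_dist_tendsto_zero.2 h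

theorem mapsTo_ball (hT : IsMeirKeeler T) {ε δ η : ℝ}
    (hδ : ∀ x y : X, ε ≤ dist x y → dist x y < ε + δ → dist (T x) (T y) < ε)
    (hηδ : η ≤ δ) {z : X} (hz : dist (T z) z < η) :
    Set.MapsTo T (Metric.ball z (ε + η)) (Metric.ball z (ε + η)) := by
  intro y hy
  rw [Metric.mem_ball] at hy ⊢
  have hTy : dist (T y) (T z) < ε := by
    rcases lt_or_ge (dist y z) ε with hlt | hge
    · exact (hT.dist_le y z).trans_lt hlt
    · exact hδ y z hge (by linarith)
  calc dist (T y) z ≤ dist (T y) (T z) + dist (T z) z := dist_triangle _ _ _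
    _ < ε + η := add_lt_add hTy hz

theorem cauchySeq_iterate (hT : IsMeirKeeler T) (x : X) : CauchySeq fun n => T^[n] x := by
  refine Metric.cauchySeq_iff'.2 fun ε hε => ?_
  obtain ⟨δ, hδ, h⟩ := hT (ε / 2) (half_pos hε)
  set η := min δ (ε / 2)
  obtain ⟨N, hN⟩ :=
    Metric.tendsto_atTop.1 (hT.tendsto_dist_iterate (T x) x) η (lt_min hδ (half_pos hε))
  have hstep : dist (T (T^[N] x)) (T^[N] x) < η := by
    simpa [← iterate_succ_apply, iterate_succ_apply'] using hN N le_rfl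
  have hmaps := hT.mapsTo_ball h (min_le_left _ _) hstep
  refine ⟨N, fun n hn => ?_⟩
  obtain ⟨k, rfl⟩ := Nat.exists_eq_add_of_le' hn
  have hk := hmaps.iterate k (Metric.mem_ball_self (by positivity))
  rw [Metric.mem_ball, ← iterate_add_apply] at hk
  linarith [min_le_right δ (ε / 2)]

end IsMeirKeeler

theorem stmt_1 {X : Type*} [MetricSpace X] [CompleteSpace X] [Nonempty X] (T : X → X)
    (hMK : ∀ ε > (0 : ℝ), ∃ δ > (0 : ℝ), ∀ x y : X,
      ε ≤ dist x y → dist x y < ε + δ → dist (T x) (T y) < ε) :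
    IsPicardOperator T := by
  have hT : IsMeirKeeler T := hMK
  obtain ⟨x₀⟩ := ‹Nonempty X›
  obtain ⟨u, hu⟩ := cauchySeq_tendsto_of_complete (hT.cauchySeq_iterate x₀)
  have hfix : IsFixedPt T u :=
    isFixedPt_of_tendsto_iterate hu hT.lipschitzWith_one.continuous.continuousAt
  exact ⟨u, hfix, fun v hv => hT.eq_of_isFixedPt hv hfix, hT.tendsto_iterate_of_isFixedPt hfix⟩
end

section
/- Let (X,d) be a complete metric space, F : (0,∞) → ℝ and φ : (0,∞) → (0,∞), and let T : X → X be a (φ,F)-contraction. Suppose (i) F is strictly increasing, (ii) F(t) → −∞ as t → 0⁺, and (iii) liminf_{s→t⁺} φ(s) > 0 for all t ≥ 0. Then T is a Picard operator. -/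
open Filter Topology

theorem stmt_4 {X : Type*} [MetricSpace X] [CompleteSpace X] [Nonempty X] (T : X → X)
    (F φ : ℝ → ℝ) (hφpos : ∀ t > (0 : ℝ), 0 < φ t)
    (hF : StrictMonoOn F (Set.Ioi 0))
    (hFlim : Tendsto F (𝓝[>] 0) atBot)
    (hliminf : ∀ t ≥ (0 : ℝ), 0 < liminf φ (𝓝[>] t))
    (hcontr : ∀ x y : X, T x ≠ T y →
      φ (dist x y) + F (dist (T x) (T y)) ≤ F (dist x y)) :
    IsPicardOperator T := by
  -- T is nonexpansive
  have hne : ∀ x y : X, dist (T x) (T y) ≤ dist x y := by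
    intro x y
    by_cases h : T x = T y
    · rw [h, dist_self]; exact dist_nonneg
    · have hd0 : 0 < dist (T x) (T y) := dist_pos.2 h
      have hxy : x ≠ y := fun e => h (by rw [e])
      have hd1 : 0 < dist x y := dist_pos.2 hxy
      have hc := hcontr x y h
      have hφ := hφpos _ hd1
      by_contra hlt
      push_neg at hlt
      have := hF (Set.mem_Ioi.2 hd1) (Set.mem_Ioi.2 hd0) hlt
      linarith
  -- T is contractive
  have hcontra : Contractive T := by
    intro x y hxy
    have hd1 : 0 < dist x y := dist_pos.2 hxy
    by_cases h : T x = T y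
    · rw [h, dist_self]; exact hd1
    · have hd0 : 0 < dist (T x) (T y) := dist_pos.2 h
      have hc := hcontr x y h
      have hφ := hφpos _ hd1
      by_contra hge
      push_neg at hge
      have := hF.monotoneOn (Set.mem_Ioi.2 hd1) (Set.mem_Ioi.2 hd0) hge
      linarith
  -- eventual lower bound on φ near any t ≥ 0 from the right
  have hev_liminf : ∀ t ≥ (0:ℝ), ∃ c > (0:ℝ), ∀ᶠ s in 𝓝[>] t, c < φ s := by
    intro t ht
    have hcpos : 0 < liminf φ (𝓝[>] t) := hliminf t ht
    have hbdd : IsBoundedUnder (· ≥ ·) (𝓝[>] t) φ := by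
      refine ⟨0, eventually_map.2 ?_⟩
      filter_upwards [self_mem_nhdsWithin] with s hs
      exact (hφpos s (lt_of_le_of_lt ht hs)).le
    refine ⟨liminf φ (𝓝[>] t) / 2, by linarith, ?_⟩
    exact eventually_lt_of_lt_liminf (by linarith) hbdd
  -- Meir–Keeler / MW condition
  have hMW : MWCondition T := by
    intro ε hε
    obtain ⟨c, hc, hev⟩ := hev_liminf ε hε.le
    obtain ⟨u1, hu1, hsub1⟩ := mem_nhdsGT_iff_exists_Ioo_subset.1 hev
    have hu1' : ε < u1 := hu1
    set L := sInf (F '' Set.Ioo ε (ε + 1)) with hL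
    have hBdd : BddBelow (F '' Set.Ioo ε (ε + 1)) := by
      refine ⟨F ε, ?_⟩
      rintro _ ⟨s, hs, rfl⟩
      exact hF.monotoneOn (Set.mem_Ioi.2 hε) (Set.mem_Ioi.2 (hε.trans hs.1)) hs.1.le
    have hNe : (F '' Set.Ioo ε (ε + 1)).Nonempty :=
      ⟨F (ε + 1/2), ⟨ε + 1/2, ⟨by linarith, by linarith⟩, rfl⟩⟩
    have hLle : ∀ s > ε, L ≤ F s := by
      intro s hs
      have h1 : min s (ε + 1/2) ∈ Set.Ioo ε (ε + 1) :=
        ⟨lt_min hs (by linarith), lt_of_le_of_lt (min_le_right _ _) (by linarith)⟩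
      have h2 : L ≤ F (min s (ε + 1/2)) := csInf_le hBdd ⟨_, h1, rfl⟩
      have h3 : F (min s (ε + 1/2)) ≤ F s :=
        hF.monotoneOn (Set.mem_Ioi.2 (hε.trans h1.1)) (Set.mem_Ioi.2 (hε.trans hs))
          (min_le_left _ _)
      linarith
    obtain ⟨_, ⟨s0, hs0, rfl⟩, hs0lt⟩ :=
      exists_lt_of_csInf_lt hNe (show L < L + c by linarith)
    refine ⟨min (u1 - ε) (s0 - ε), lt_min (by linarith [hu1']) (by linarith [hs0.1]), ?_⟩
    intro x y hd1 hd2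
    by_cases h : T x = T y
    · rw [h, dist_self]; exact hε.le
    · have hdu1 : dist x y < u1 := lt_of_lt_of_le hd2 (by
        have := min_le_left (u1 - ε) (s0 - ε); linarith)
    -- continue
      have hds0 : dist x y < s0 := lt_of_lt_of_le hd2 (by
        have := min_le_right (u1 - ε) (s0 - ε); linarith)
      have hφd : c < φ (dist x y) := hsub1 ⟨hd1, hdu1⟩
      have hFd : F (dist x y) ≤ F s0 :=
        hF.monotoneOn (Set.mem_Ioi.2 (hε.trans hd1)) (Set.mem_Ioi.2 (hε.trans hs0.1)) hds0.le
      have hc2 := hcontr x y h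
      by_contra hgt
      push_neg at hgt
      have := hLle _ hgt
      linarith
  -- main lemma : every orbit converges to some fixed point
  have hmain : ∀ x : X, ∃ u : X, T u = u ∧ Tendsto (fun n => T^[n] x) atTop (𝓝 u) := by
    intro x
    set s : ℕ → X := fun n => T^[n] x with hs
    have hs_succ : ∀ n, s (n + 1) = T (s n) := fun n => Function.iterate_succ_apply' T n x
    set d : ℕ → ℝ := fun n => dist (s n) (s (n + 1)) with hd
    have hdnn : ∀ n, 0 ≤ d n := fun n => dist_nonneg
    -- step distances tend to 0
    have hd0 : Tendsto d atTop (𝓝 0) := by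
      by_cases hcase : ∃ N, s (N + 1) = s N
      · obtain ⟨N, hN⟩ := hcase
        have hconst : ∀ n, N ≤ n → s n = s N := by
          intro n hn
          induction n, hn using Nat.le_induction with
          | base => rfl
          | succ n hn ih => rw [hs_succ n, ih, ← hs_succ N, hN]
        have : ∀ n, N ≤ n → d n = 0 := by
          intro n hn
          simp only [hd]
          rw [hconst n hn, hconst (n+1) (by omega), dist_self]
        refine Tendsto.congr' ?_ (tendsto_const_nhds : Tendsto (fun _ : ℕ => (0:ℝ)) atTop (𝓝 0))
        filter_upwards [eventually_ge_atTop N] with n hn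
        exact (this n hn).symm
      · push_neg at hcase
        have hdpos : ∀ n, 0 < d n := fun n => dist_pos.2 fun e => hcase n (by rw [e])
        have hanti : ∀ n, d (n + 1) < d n := by
          intro n
          have : dist (T (s n)) (T (s (n+1))) < dist (s n) (s (n+1)) :=
            hcontra _ _ fun e => hcase n (by rw [e])
          simpa only [hd, hs_succ n, hs_succ (n+1)] using this
        have hanti' : Antitone d := antitone_nat_of_succ_le fun n => (hanti n).le
        have hbdd : BddBelow (Set.range d) := ⟨0, by rintro _ ⟨n, rfl⟩; exact hdnn n⟩
        have htend : Tendsto d atTop (𝓝 (⨅ n, d n)) := tendsto_atTop_ciInf hanti' hbdd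
        set t := ⨅ n, d n with ht
        have htnn : 0 ≤ t := le_ciInf hdnn
        have htlt : ∀ n, t < d n := by
          intro n
          rcases lt_or_eq_of_le (ciInf_le hbdd n) with h | h
          · exact h
          · exact absurd (ciInf_le hbdd (n+1)) (not_le.2 (by rw [h]; exact hanti n))
        rcases eq_or_lt_of_le htnn with h0 | h0
        · rwa [← h0] at htend
        · exfalso
          obtain ⟨c, hc, hev⟩ := hev_liminf t htnn
          have htend' : Tendsto d atTop (𝓝[>] t) :=
            tendsto_nhdsWithin_of_tendsto_nhds_of_eventually_within d htend
              (Eventually.of_forall htlt)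
          obtain ⟨N, hN⟩ := eventually_atTop.1 (htend'.eventually hev)
          have hstep : ∀ n, N ≤ n → F (d (n + 1)) ≤ F (d n) - c := by
            intro n hn
            have hTne : T (s n) ≠ T (s (n + 1)) := by
              rw [← hs_succ n, ← hs_succ (n+1)]
              exact fun e => hcase (n+1) e.symm
            have := hcontr (s n) (s (n+1)) hTne
            rw [← hs_succ n, ← hs_succ (n+1)] at this
            have hφn := hN n hn
            simp only [hd] at *
            linarith
          have hiter : ∀ k : ℕ, F (d (N + k)) ≤ F (d N) - k * c := by
            intro k
            induction k with
            | zero => simp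
            | succ k ih =>
              have := hstep (N + k) (by omega)
              have heq : N + (k+1) = (N + k) + 1 := by omega
              rw [heq]
              push_cast
              linarith
          obtain ⟨k, hk⟩ := exists_nat_gt ((F (d N) - F t) / c)
          have hk' : F (d N) - F t < k * c := by
            rw [div_lt_iff₀ hc] at hk
            linarith
          have hFt : F t < F (d (N + k)) :=
            hF (Set.mem_Ioi.2 h0) (Set.mem_Ioi.2 (h0.trans (htlt _))) (htlt _)
          have := hiter k
          linarith
    -- Cauchy
    have hcauchy : CauchySeq s := by
      rw [Metric.cauchySeq_iff']
      intro ε hε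
      obtain ⟨δ, hδ, hMWε⟩ := hMW (ε / 2) (by linarith)
      set δ' := min δ (ε / 2) with hδ'
      have hδ'0 : 0 < δ' := lt_min hδ (by linarith)
      obtain ⟨N, hN⟩ := eventually_atTop.1 (hd0.eventually (gt_mem_nhds hδ'0))
      have key : ∀ m : ℕ, dist (s (N + m)) (s N) < ε / 2 + δ' := by
        intro m
        induction m with
        | zero => simpa using by positivity
        | succ m ih =>
          have hb : dist (s (N + m + 1)) (s (N + 1)) ≤ ε / 2 := by
            rw [hs_succ (N + m), hs_succ N]
            rcases le_or_gt (dist (s (N + m)) (s N)) (ε / 2) with h | h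
            · exact le_trans (hne _ _) h
            · exact hMWε _ _ h (lt_of_lt_of_le ih (by
                have := min_le_left δ (ε/2); linarith))
          have hdN : dist (s (N + 1)) (s N) < δ' := by
            rw [dist_comm]; exact hN N le_rfl
          calc dist (s (N + m + 1)) (s N)
              ≤ dist (s (N + m + 1)) (s (N + 1)) + dist (s (N + 1)) (s N) := dist_triangle _ _ _
            _ < ε / 2 + δ' := by
                have heq : N + (m + 1) = N + m + 1 := by omega
                linarith
      refine ⟨N, fun n hn => ?_⟩
      have := key (n - N)
      rw [show N + (n - N) = n by omega] at this
      have : dist (s n) (s N) < ε / 2 + δ' := this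
      have hle : δ' ≤ ε / 2 := min_le_right _ _
      linarith
    obtain ⟨u, hu⟩ := cauchySeq_tendsto_of_complete hcauchy
    have hTcont : Continuous T :=
      (LipschitzWith.of_dist_le_mul (K := 1) fun a b => by simpa using hne a b).continuous
    have h1 : Tendsto (fun n => s (n + 1)) atTop (𝓝 u) :=
      hu.comp (tendsto_add_atTop_nat 1)
    have h2 : Tendsto (fun n => T (s n)) atTop (𝓝 (T u)) :=
      (hTcont.tendsto u).comp hu
    have hfix : T u = u := by
      refine tendsto_nhds_unique (h2.congr fun n => ?_) h1
      exact (hs_succ n).symm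
    exact ⟨u, hfix, hu⟩
  obtain ⟨u, hfix, htend⟩ := hmain (Classical.arbitrary X)
  have huniq : ∀ v : X, T v = v → v = u := by
    intro v hv
    by_contra hvu
    have := hcontra v u hvu
    rw [hv, hfix] at this
    exact lt_irrefl _ this
  refine ⟨u, hfix, huniq, fun x => ?_⟩
  obtain ⟨w, hw, hwt⟩ := hmain x
  rwa [huniq w hw] at hwt
end

section
/- Let (X,d) be a complete metric space and T : X → X. Suppose there is a function φ : [0,∞) → [0,∞) such that φ(t) < t and limsup_{s→t⁺} φ(s) < t for all t > 0, and d(Tx,Ty) ≤ φ(d(x,y)) for all x,y ∈ X. Then T has a unique fixed point in X. -/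
open Filter Topology

theorem stmt_5 {X : Type*} [MetricSpace X] [CompleteSpace X] [Nonempty X] (T : X → X)
    (φ : ℝ → ℝ) (hφ0 : ∀ t ≥ (0 : ℝ), 0 ≤ φ t)
    (h1 : ∀ t > (0 : ℝ), φ t < t)
    (h2 : ∀ t > (0 : ℝ), limsup φ (𝓝[>] t) < t)
    (hcontr : ∀ x y : X, dist (T x) (T y) ≤ φ (dist x y)) :
    ∃! u : X, T u = u := by
  -- T is nonexpansive
  have hne : ∀ x y : X, dist (T x) (T y) ≤ dist x y := by
    intro x y
    rcases eq_or_ne x y with rfl | h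
    · simp
    · exact le_of_lt (lt_of_le_of_lt (hcontr x y) (h1 _ (dist_pos.mpr h)))
  -- Meir–Keeler type condition
  have hD : ∀ ε > (0:ℝ), ∃ δ > (0:ℝ), ∀ x y : X, 0 < dist x y →
      dist x y < ε + δ → dist (T x) (T y) < ε := by
    intro ε hε
    have hb : IsBoundedUnder (· ≤ ·) (𝓝[>] ε) φ := by
      refine ⟨ε + 1, eventually_map.mpr ?_⟩
      have hm : Set.Ioo ε (ε + 1) ∈ 𝓝[>] ε :=
        Ioo_mem_nhdsGT_of_mem ⟨le_refl ε, by linarith⟩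
      filter_upwards [hm] with s hs
      exact le_of_lt ((h1 s (lt_trans hε hs.1)).trans hs.2)
    have hev : ∀ᶠ s in 𝓝[>] ε, φ s < ε := eventually_lt_of_limsup_lt (h2 ε hε) hb
    rcases mem_nhdsGT_iff_exists_Ioo_subset.mp hev with ⟨u, hu, hsub⟩
    refine ⟨u - ε, sub_pos.mpr hu, ?_⟩
    intro x y hpos hlt
    rcases le_or_gt (dist x y) ε with hle | hgt
    · exact lt_of_le_of_lt (hcontr x y) (lt_of_lt_of_le (h1 _ hpos) hle)
    · exact lt_of_le_of_lt (hcontr x y) (hsub ⟨hgt, by linarith⟩)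
  set x0 : X := Classical.arbitrary X with hx0
  set f : ℕ → X := fun n => T^[n] x0 with hf
  set c : ℕ → ℝ := fun n => dist (f n) (f (n + 1)) with hc
  have hstep : ∀ n, f (n + 1) = T (f n) := fun n => Function.iterate_succ_apply' T n x0
  have hcmono : ∀ n, c (n + 1) ≤ c n := by
    intro n
    have : c (n + 1) = dist (T (f n)) (T (f (n + 1))) := by
      simp only [hc, hstep]
    rw [this]
    exact hne _ _
  have hant : Antitone c := antitone_nat_of_succ_le hcmono
  have hbdd : BddBelow (Set.range c) := ⟨0, by rintro _ ⟨n, rfl⟩; exact dist_nonneg⟩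
  set L : ℝ := ⨅ n, c n with hL
  have htend : Tendsto c atTop (𝓝 L) := tendsto_atTop_ciInf hant hbdd
  have hLle : ∀ n, L ≤ c n := fun n => ciInf_le hbdd n
  have hL0 : 0 ≤ L := le_ciInf fun n => dist_nonneg
  have hLz : L = 0 := by
    by_contra hLne
    have hLpos : 0 < L := lt_of_le_of_ne hL0 (Ne.symm hLne)
    obtain ⟨δ, hδpos, hδ⟩ := hD L hLpos
    have hev : ∀ᶠ n in atTop, c n < L + δ :=
      htend.eventually_lt_const (by linarith)
    obtain ⟨n, hn⟩ := hev.exists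
    have hcpos : 0 < c n := lt_of_lt_of_le hLpos (hLle n)
    have : c (n + 1) < L := by
      have h' : dist (T (f n)) (T (f (n + 1))) < L := hδ _ _ hcpos hn
      have : c (n + 1) = dist (T (f n)) (T (f (n + 1))) := by
        simp only [hc, hstep]
      rw [this]; exact h'
    exact absurd this (not_lt.mpr (hLle (n + 1)))
  rw [hLz] at htend
  -- Cauchy sequence
  have hcauchy : CauchySeq f := by
    rw [Metric.cauchySeq_iff']
    intro ε hε
    obtain ⟨δ, hδpos, hδ⟩ := hD (ε / 2) (by linarith)
    set δ' : ℝ := min δ (ε / 2) with hδ'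
    have hδ'pos : 0 < δ' := lt_min hδpos (by linarith)
    have hev : ∀ᶠ n in atTop, c n < δ' := htend.eventually_lt_const hδ'pos
    obtain ⟨N, hN⟩ := eventually_atTop.mp hev
    have key : ∀ k, ∀ n ≥ N, dist (f n) (f (n + k)) < ε / 2 + δ' := by
      intro k
      induction k with
      | zero => intro n _; simpa using by positivity
      | succ k ih =>
        intro n hn
        have ihn := ih n hn
        have hbound : dist (f (n + 1)) (f (n + (k + 1))) ≤ ε / 2 := by
          rcases eq_or_ne (f n) (f (n + k)) with heq | hne'
          · have : f (n + 1) = f (n + (k + 1)) := by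
              rw [hstep, show n + (k + 1) = (n + k) + 1 by ring, hstep, heq]
            rw [this, dist_self]; linarith
          · have hpos : 0 < dist (f n) (f (n + k)) := dist_pos.mpr hne'
            have hlt : dist (f n) (f (n + k)) < ε / 2 + δ := by
              have : δ' ≤ δ := min_le_left _ _
              linarith
            have := hδ _ _ hpos hlt
            have heq2 : dist (f (n + 1)) (f (n + (k + 1))) =
                dist (T (f n)) (T (f (n + k))) := by
              rw [hstep, show n + (k + 1) = (n + k) + 1 by ring, hstep]
            rw [heq2]; exact le_of_lt this
        calc dist (f n) (f (n + (k + 1)))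
            ≤ dist (f n) (f (n + 1)) + dist (f (n + 1)) (f (n + (k + 1))) :=
              dist_triangle _ _ _
          _ < δ' + ε / 2 := by
              have := hN n hn
              have h0 : dist (f n) (f (n + 1)) = c n := rfl
              linarith
          _ = ε / 2 + δ' := by ring
    refine ⟨N, fun n hn => ?_⟩
    have := key (n - N) N le_rfl
    rw [Nat.add_sub_cancel' hn] at this
    rw [dist_comm]
    have hle : δ' ≤ ε / 2 := min_le_right _ _
    linarith
  obtain ⟨u, hu⟩ := cauchySeq_tendsto_of_complete hcauchy
  have hTcont : Continuous T := by
    refine (LipschitzWith.of_dist_le_mul (K := 1) ?_).continuous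
    intro x y; simpa using hne x y
  have h1' : Tendsto (fun n => f (n + 1)) atTop (𝓝 u) :=
    hu.comp (tendsto_add_atTop_nat 1)
  have h2' : Tendsto (fun n => T (f n)) atTop (𝓝 (T u)) :=
    (hTcont.tendsto u).comp hu
  have hfix : T u = u := by
    have : (fun n => f (n + 1)) = fun n => T (f n) := funext hstep
    rw [this] at h1'
    exact tendsto_nhds_unique h2' h1'
  refine ⟨u, hfix, ?_⟩
  intro v hv
  by_contra hvu
  have hpos : 0 < dist v u := dist_pos.mpr hvu
  have : dist v u ≤ φ (dist v u) := by
    calc dist v u = dist (T v) (T u) := by rw [hv, hfix]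
      _ ≤ φ (dist v u) := hcontr v u
  exact absurd this (not_le.mpr (h1 _ hpos))
end

section
/- Let (X,d) be a complete metric space and T : X → X be an (E,F)-contraction. Then T is a CJMP-contraction, hence a Picard operator. -/
/-! An `(E,F)`-contraction is contractive by (C1). If it violated the Matkowski–Węgrzyk condition
at some `ε > 0`, there would be pairs with `d(x,y) ↓ ε` and `ε < d(Tx,Ty) < d(x,y)`, along which
`F(d(Tx,Ty)) - E(d(x,y)) ≤ 0`, contradicting (C2). For a CJMP-contraction the consecutive
distances of an orbit decrease to `0`, and the Matkowski–Węgrzyk condition makes the orbit Cauchy;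
its limit is the fixed point, unique by contractivity. -/

open Filter Topology

theorem Real.limsup_nonpos {α : Type*} {f : Filter α} {u : α → ℝ} (h : ∀ᶠ n in f, u n ≤ 0) :
    limsup u f ≤ 0 := by
  rw [limsup_eq]
  exact Real.sInf_nonpos' ⟨0, h, le_rfl⟩

section

variable {X : Type*} [MetricSpace X] {T : X → X}

namespace Contractive

theorem dist_le (hT : Contractive T) (x y : X) : dist (T x) (T y) ≤ dist x y := by
  rcases eq_or_ne x y with rfl | hxy
  · simp
  · exact (hT x y hxy).le

theorem continuous (hT : Contractive T) : Continuous T :=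
  (LipschitzWith.of_dist_le_mul (K := 1) fun x y => by simpa using hT.dist_le x y).continuous

theorem eq_of_isFixedPt (hT : Contractive T) {u v : X} (hu : T u = u) (hv : T v = v) :
    u = v := by
  by_contra huv
  have := hT u v huv
  rw [hu, hv] at this
  exact lt_irrefl _ this

end Contractive

theorem contractive_of_efContraction {E F : ℝ → ℝ}
    (hC1 : ∀ t s : ℝ, 0 < t → t ≤ s → E t < F s)
    (hcontr : ∀ x y : X, T x ≠ T y → F (dist (T x) (T y)) ≤ E (dist x y)) :
    Contractive T := by
  intro x y hxy
  by_cases hT : T x = T y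
  · simpa [hT] using hxy
  · by_contra hle
    have := hC1 _ _ (dist_pos.mpr hxy) (not_lt.mp hle)
    linarith [hcontr x y hT]

theorem mwCondition_of_efContraction {E F : ℝ → ℝ}
    (hC2 : ∀ t > (0 : ℝ), ∀ tn : ℕ → ℝ, (∀ n, t < tn n) → Tendsto tn atTop (𝓝 t) →
      ∀ sn : ℕ → ℝ, (∀ n, t < sn n ∧ sn n < tn n) →
        0 < limsup (fun n => F (sn n) - E (tn n)) atTop)
    (hT : Contractive T)
    (hcontr : ∀ x y : X, T x ≠ T y → F (dist (T x) (T y)) ≤ E (dist x y)) :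
    MWCondition T := by
  intro ε hε
  by_contra! hbad
  choose x y hlow hup hmap using fun n : ℕ => hbad (1 / (n + 1)) Nat.one_div_pos_of_nat
  have hne : ∀ n, x n ≠ y n := fun n hxy => by
    have := hlow n
    rw [hxy, dist_self] at this
    linarith
  have hTne : ∀ n, T (x n) ≠ T (y n) := fun n hxy => by
    have := hmap n
    rw [hxy, dist_self] at this
    linarith
  have htend : Tendsto (fun n => dist (x n) (y n)) atTop (𝓝 ε) := by
    have hbound : Tendsto (fun n : ℕ => ε + 1 / ((n : ℝ) + 1)) atTop (𝓝 ε) := by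
      simpa using (tendsto_const_nhds (x := ε)).add (tendsto_one_div_add_atTop_nhds_zero_nat (𝕜 := ℝ))
    exact tendsto_of_tendsto_of_tendsto_of_le_of_le tendsto_const_nhds hbound
      (fun n => (hlow n).le) (fun n => (hup n).le)
  have hpos := hC2 ε hε _ hlow htend (fun n => dist (T (x n)) (T (y n)))
    fun n => ⟨hmap n, hT _ _ (hne n)⟩
  have hnonpos : limsup (fun n => F (dist (T (x n)) (T (y n))) - E (dist (x n) (y n))) atTop
      ≤ 0 :=
    Real.limsup_nonpos (Eventually.of_forall fun n => sub_nonpos.mpr (hcontr _ _ (hTne n)))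
  linarith

namespace IsCJMP

/-- Below `ε` nonexpansiveness already gives the Matkowski–Węgrzyk bound. -/
theorem exists_dist_le (hT : IsCJMP T) {ε : ℝ} (hε : 0 < ε) :
    ∃ δ > 0, ∀ x y : X, dist x y < ε + δ → dist (T x) (T y) ≤ ε := by
  obtain ⟨δ, hδ, hMW⟩ := hT.2 ε hε
  refine ⟨δ, hδ, fun x y hxy => ?_⟩
  rcases le_or_gt (dist x y) ε with hle | hgt
  · exact (hT.1.dist_le x y).trans hle
  · exact hMW x y hgt hxy

theorem tendsto_dist_iterate_succ (hT : IsCJMP T) (x : X) :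
    Tendsto (fun n => dist (T^[n] x) (T^[n + 1] x)) atTop (𝓝 0) := by
  set a : ℕ → ℝ := fun n => dist (T^[n] x) (T^[n + 1] x)
  have ha_succ : ∀ n, a (n + 1) = dist (T (T^[n] x)) (T (T^[n + 1] x)) := fun n => by
    simp only [a, Function.iterate_succ_apply']
  have hanti : Antitone a :=
    antitone_nat_of_succ_le fun n => (ha_succ n).trans_le (hT.1.dist_le _ _)
  have hbdd : BddBelow (Set.range a) := ⟨0, Set.forall_mem_range.mpr fun _ => dist_nonneg⟩
  have htend := tendsto_atTop_ciInf hanti hbdd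
  set L := ⨅ n, a n
  have hL : ∀ n, L ≤ a n := ciInf_le hbdd
  suffices hL0 : L = 0 from hL0 ▸ htend
  by_contra hL0
  have hLpos : 0 < L := (le_ciInf fun n => dist_nonneg).lt_of_ne' hL0
  obtain ⟨δ, hδ, hMW⟩ := hT.exists_dist_le hLpos
  obtain ⟨n, hn⟩ := (htend.eventually (eventually_lt_nhds (lt_add_of_pos_right L hδ))).exists
  -- `a (n + 1) ≤ L` forces `a (n + 1) = L > 0`, and contractivity then pushes `a (n + 2)` below `L`.
  have h1 : a (n + 1) ≤ L := (ha_succ n).trans_le (hMW _ _ hn)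
  have hne : T^[n + 1] x ≠ T^[n + 2] x := fun h => by
    have : a (n + 1) = 0 := by simp only [a, h, dist_self]
    linarith [hL (n + 1)]
  have h2 : a (n + 2) < a (n + 1) := (ha_succ (n + 1)).trans_lt (hT.1 _ _ hne)
  linarith [hL (n + 2)]

theorem cauchySeq_iterate (hT : IsCJMP T) (x : X) : CauchySeq fun n => T^[n] x := by
  rw [Metric.cauchySeq_iff']
  intro ε hε
  obtain ⟨δ, hδ, hMW⟩ := hT.exists_dist_le (half_pos hε)
  set η := min δ (ε / 2)
  obtain ⟨N, hN⟩ := ((hT.tendsto_dist_iterate_succ x).eventually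
    (eventually_lt_nhds (lt_min hδ (half_pos hε)))).exists
  -- The orbit never leaves the ball of radius `ε/2 + η` about `T^[N] x`: the first step is shorter
  -- than `η`, and the rest is the image of a segment that is already in the ball.
  have hball : ∀ k, dist (T^[N] x) (T^[N + k] x) < ε / 2 + η := by
    intro k
    induction k with
    | zero => simpa using add_pos (half_pos hε) (lt_min hδ (half_pos hε))
    | succ k ih =>
      have hstep : dist (T^[N + 1] x) (T^[N + (k + 1)] x) ≤ ε / 2 := by
        rw [← add_assoc, Function.iterate_succ_apply', Function.iterate_succ_apply']
        exact hMW _ _ (ih.trans_le (by gcongr; exact min_le_left _ _))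
      calc dist (T^[N] x) (T^[N + (k + 1)] x)
          ≤ dist (T^[N] x) (T^[N + 1] x) + dist (T^[N + 1] x) (T^[N + (k + 1)] x) :=
            dist_triangle _ _ _
        _ < η + ε / 2 := add_lt_add_of_lt_of_le hN hstep
        _ = ε / 2 + η := add_comm _ _
  refine ⟨N, fun n hn => ?_⟩
  obtain ⟨k, rfl⟩ := Nat.exists_eq_add_of_le hn
  rw [dist_comm]
  linarith [hball k, min_le_right δ (ε / 2)]

theorem isPicardOperator [CompleteSpace X] [Nonempty X] (hT : IsCJMP T) :
    IsPicardOperator T := by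
  have horbit : ∀ x, ∃ u, T u = u ∧ Tendsto (fun n => T^[n] x) atTop (𝓝 u) := fun x => by
    obtain ⟨u, hu⟩ := cauchySeq_tendsto_of_complete (hT.cauchySeq_iterate x)
    exact ⟨u, isFixedPt_of_tendsto_iterate hu hT.1.continuous.continuousAt, hu⟩
  obtain ⟨u, hu, -⟩ := horbit (Classical.arbitrary X)
  refine ⟨u, hu, fun v hv => hT.1.eq_of_isFixedPt hv hu, fun x => ?_⟩
  obtain ⟨w, hw, hxw⟩ := horbit x
  rwa [hT.1.eq_of_isFixedPt hw hu] at hxw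

end IsCJMP

end

theorem stmt_6 {X : Type*} [MetricSpace X] [CompleteSpace X] [Nonempty X] (T : X → X)
    (E F : ℝ → ℝ)
    (hC1 : ∀ t s : ℝ, 0 < t → t ≤ s → E t < F s)
    (hC2 : ∀ t > (0 : ℝ), ∀ tn : ℕ → ℝ, (∀ n, t < tn n) → Tendsto tn atTop (𝓝 t) →
      ∀ sn : ℕ → ℝ, (∀ n, t < sn n ∧ sn n < tn n) →
        0 < limsup (fun n => F (sn n) - E (tn n)) atTop)
    (hcontr : ∀ x y : X, T x ≠ T y → F (dist (T x) (T y)) ≤ E (dist x y)) :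
    IsCJMP T ∧ IsPicardOperator T := by
  have hT : Contractive T := contractive_of_efContraction hC1 hcontr
  have hCJMP : IsCJMP T := ⟨hT, mwCondition_of_efContraction hC2 hT hcontr⟩
  exact ⟨hCJMP, hCJMP.isPicardOperator⟩
end

section
/- Let (X,d) be a complete metric space, F : (0,∞) → ℝ nondecreasing, and φ : (0,∞) → (0,∞) satisfying condition (iii'). If T : X → X satisfies φ(d(x,y)) + F(d(Tx,Ty)) ≤ F(d(x,y)) for all x,y ∈ X with Tx ≠ Ty, then T is a Picard operator. -/
open Filter Topology

section
variable {X : Type*} [MetricSpace X] {T : X → X}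

lemma nonexp (hc : Contractive T) (x y : X) : dist (T x) (T y) ≤ dist x y := by
  rcases eq_or_ne x y with rfl | h
  · simp
  · exact (hc x y h).le

lemma dist_orbit_zero (hc : Contractive T) (hmw : MWCondition T) (x : X) :
    Tendsto (fun n => dist (T^[n] x) (T^[n+1] x)) atTop (𝓝 0) := by
  set a : ℕ → ℝ := fun n => dist (T^[n] x) (T^[n+1] x) with ha
  have hanti : Antitone a := by
    refine antitone_nat_of_succ_le fun n => ?_
    have : a (n+1) ≤ a n := by
      simp only [ha, Function.iterate_succ_apply']
      exact nonexp hc _ _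
    exact this
  have hbdd : BddBelow (Set.range a) := ⟨0, by rintro _ ⟨n, rfl⟩; exact dist_nonneg⟩
  have htend : Tendsto a atTop (𝓝 (⨅ n, a n)) := tendsto_atTop_ciInf hanti hbdd
  set t := ⨅ n, a n with hts
  have ht0 : 0 ≤ t := le_ciInf fun n => dist_nonneg
  rcases eq_or_lt_of_le ht0 with h | h
  · rwa [← h] at htend
  · exfalso
    have hgt : ∀ n, t < a n := by
      intro n
      rcases lt_or_eq_of_le (ciInf_le hbdd n : t ≤ a n) with h' | h'
      · exact h'
      · -- a n = t > 0, so x_n ≠ x_{n+1}, so a (n+1) < a n = t ≤ a(n+1), contra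
        exfalso
        have hne : T^[n] x ≠ T (T^[n] x) := by
          intro he
          have : a n = 0 := by
            simp only [ha, Function.iterate_succ_apply']
            rw [← he]; simp
          rw [← h'] at this
          exact absurd this (by simpa [hts] using h.ne')
        have hlt : a (n+1) < a n := by
          simp only [ha, Function.iterate_succ_apply']
          exact hc _ _ hne
        have hle := ciInf_le hbdd (n+1)
        rw [← hts] at hle h'
        rw [h'] at hle
        linarith
    obtain ⟨δ, hδ, hMW⟩ := hmw t h
    have hev : ∀ᶠ n in atTop, a n < t + δ := htend.eventually (eventually_lt_nhds (by linarith))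
    obtain ⟨n, hn⟩ := hev.exists
    have h1 : a (n+1) ≤ t := by
      have := hMW (T^[n] x) (T^[n+1] x) (hgt n) hn
      simpa only [ha, Function.iterate_succ_apply'] using this
    exact absurd h1 (not_le.mpr (hgt (n+1)))

lemma orbit_cauchy (hc : Contractive T) (hmw : MWCondition T) (x : X) :
    CauchySeq (fun n => T^[n] x) := by
  rw [Metric.cauchySeq_iff]
  intro ε hε
  obtain ⟨δ0, hδ0, hMW⟩ := hmw (ε/4) (by linarith)
  set δ := min δ0 (ε/4) with hδs
  have hδpos : 0 < δ := lt_min hδ0 (by linarith)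
  have hδle : δ ≤ ε/4 := min_le_right _ _
  obtain ⟨N, hN⟩ := (Metric.tendsto_atTop.mp (dist_orbit_zero hc hmw x)) (δ/3) (by linarith)
  have hN' : dist (T^[N] x) (T^[N+1] x) < δ/3 := by
    have := hN N le_rfl
    rwa [Real.dist_eq, sub_zero, abs_of_nonneg dist_nonneg] at this
  have key : ∀ p, dist (T^[N] x) (T^[N+p] x) < ε/4 + δ/3 := by
    intro p
    induction p with
    | zero => simpa using by positivity
    | succ p ih =>
      have step : dist (T^[N+1] x) (T^[N+p+1] x) ≤ ε/4 := by
        have heq : dist (T^[N+1] x) (T^[N+p+1] x)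
            = dist (T (T^[N] x)) (T (T^[N+p] x)) := by
          simp [Function.iterate_succ_apply']
        rw [heq]
        rcases le_or_gt (dist (T^[N] x) (T^[N+p] x)) (ε/4) with h | h
        · exact (nonexp hc _ _).trans h
        · refine hMW _ _ h ?_
          calc dist (T^[N] x) (T^[N+p] x) < ε/4 + δ/3 := ih
            _ < ε/4 + δ0 := by
              have h1 : δ ≤ δ0 := min_le_left _ _
              linarith
      calc dist (T^[N] x) (T^[N+p+1] x)
          ≤ dist (T^[N] x) (T^[N+1] x) + dist (T^[N+1] x) (T^[N+p+1] x) := dist_triangle _ _ _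
        _ < δ/3 + ε/4 := by linarith
        _ = ε/4 + δ/3 := by ring
  refine ⟨N, fun m hm n hn => ?_⟩
  obtain ⟨p, rfl⟩ := Nat.exists_eq_add_of_le hm
  obtain ⟨q, rfl⟩ := Nat.exists_eq_add_of_le hn
  calc dist (T^[N+p] x) (T^[N+q] x)
      ≤ dist (T^[N+p] x) (T^[N] x) + dist (T^[N] x) (T^[N+q] x) := dist_triangle _ _ _
    _ < (ε/4 + δ/3) + (ε/4 + δ/3) := by
        have := key p; have := key q; rw [dist_comm] at *; linarith [key p, key q]
    _ ≤ ε := by linarith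

end

section
variable {X : Type*} [MetricSpace X] {T : X → X}

lemma cjmp_picard [CompleteSpace X] [Nonempty X] (hc : Contractive T) (hmw : MWCondition T) :
    (∃ u : X, T u = u ∧ (∀ v : X, T v = v → v = u) ∧
      ∀ x : X, Tendsto (fun n => T^[n] x) atTop (𝓝 u)) := by
  have horbit : ∀ x : X, ∃ u : X, T u = u ∧ Tendsto (fun n => T^[n] x) atTop (𝓝 u) := by
    intro x
    obtain ⟨u, hu⟩ := cauchySeq_tendsto_of_complete (orbit_cauchy hc hmw x)
    refine ⟨u, ?_, hu⟩
    have hTcont : Continuous T := by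
      refine LipschitzWith.continuous (K := 1) ?_
      refine LipschitzWith.of_dist_le_mul fun a b => ?_
      simpa using nonexp hc a b
    have h1 : Tendsto (fun n => T (T^[n] x)) atTop (𝓝 (T u)) :=
      (hTcont.tendsto u).comp hu
    have h2 : Tendsto (fun n => T (T^[n] x)) atTop (𝓝 u) := by
      have : (fun n => T (T^[n] x)) = fun n => T^[n+1] x := by
        funext n; rw [Function.iterate_succ_apply']
      rw [this]
      exact hu.comp (tendsto_add_atTop_nat 1)
    exact tendsto_nhds_unique h1 h2
  have huniq : ∀ u v : X, T u = u → T v = v → u = v := by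
    intro u v hu hv
    by_contra hne
    have := hc u v hne
    rw [hu, hv] at this
    exact lt_irrefl _ this
  obtain ⟨u, hu, hconv⟩ := horbit (Classical.arbitrary X)
  refine ⟨u, hu, fun v hv => huniq v u hv hu, fun x => ?_⟩
  obtain ⟨w, hw, hwconv⟩ := horbit x
  rwa [huniq w u hw hu] at hwconv

end


theorem stmt_10 {X : Type*} [MetricSpace X] [CompleteSpace X] [Nonempty X] (T : X → X)
    (F φ : ℝ → ℝ) (hφpos : ∀ t > (0 : ℝ), 0 < φ t)
    (hF : MonotoneOn F (Set.Ioi 0))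
    (hiii : ∀ t > (0 : ℝ), ∀ tn : ℕ → ℝ, (∀ n, t < tn n) → Tendsto tn atTop (𝓝 t) →
      0 < limsup (fun n => φ (tn n)) atTop)
    (hcontr : ∀ x y : X, T x ≠ T y →
      φ (dist x y) + F (dist (T x) (T y)) ≤ F (dist x y)) :
    IsPicardOperator T := by
  have hc : Contractive T := by
    intro x y hxy
    have hd : 0 < dist x y := dist_pos.mpr hxy
    rcases eq_or_ne (T x) (T y) with he | he
    · simpa [he] using hd
    · by_contra hle
      push_neg at hle
      have hdT : 0 < dist (T x) (T y) := dist_pos.mpr he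
      have h1 := hcontr x y he
      have h2 : F (dist x y) ≤ F (dist (T x) (T y)) := hF hd hdT hle
      have := hφpos _ hd
      linarith
  have hmw : MWCondition T := by
    by_contra hno
    simp only [MWCondition, not_forall, not_exists, not_and] at hno
    obtain ⟨ε, hε, hεno⟩ := hno
    push_neg at hεno
    -- for each n, pick x,y with ε < d(x,y) < ε + 1/(n+1) and ε < d(Tx,Ty)
    have hch : ∀ n : ℕ, ∃ p : X × X, ε < dist p.1 p.2 ∧ dist p.1 p.2 < ε + 1/(n+1) ∧
        ε < dist (T p.1) (T p.2) := by
      intro n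
      obtain ⟨x, y, h1, h2, h3⟩ := hεno (1/(n+1)) (by positivity)
      exact ⟨(x, y), h1, h2, h3⟩
    choose p hp1 hp2 hp3 using hch
    set tn : ℕ → ℝ := fun n => dist (p n).1 (p n).2 with htn
    have htendn : Tendsto tn atTop (𝓝 ε) := by
      have hup : Tendsto (fun n : ℕ => ε + 1/(n+1 : ℝ)) atTop (𝓝 (ε + 0)) :=
        tendsto_const_nhds.add tendsto_one_div_add_atTop_nhds_zero_nat
      rw [add_zero] at hup
      exact tendsto_of_tendsto_of_tendsto_of_le_of_le tendsto_const_nhds hup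
        (fun n => (hp1 n).le) (fun n => (hp2 n).le)
    have hS := hiii ε hε tn hp1 htendn
    -- lower bound L for F on (ε, ε+1)
    set s0 : Set ℝ := F '' Set.Ioo ε (ε+1) with hs0
    have hs0ne : s0.Nonempty := ⟨F (ε + 1/2), ⟨ε + 1/2, ⟨by linarith, by linarith⟩, rfl⟩⟩
    have hs0bdd : BddBelow s0 := by
      refine ⟨F ε, ?_⟩
      rintro _ ⟨s, hs, rfl⟩
      exact hF (Set.mem_Ioi.mpr hε) (Set.mem_Ioi.mpr (hε.trans hs.1)) hs.1.le
    set L := sInf s0 with hL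
    -- key: d(Tx_n, Ty_n) ∈ (ε, ε+1) so F ≥ L; and eventually F(tn n) ≤ F s for s ∈ Ioo
    have hdTlt : ∀ n, dist (T (p n).1) (T (p n).2) < tn n := by
      intro n
      refine hc _ _ ?_
      intro he
      have : dist (p n).1 (p n).2 = 0 := by rw [he]; simp
      have := hp1 n
      rw [htn] at *
      simp only [he] at this ⊢
      linarith [hp1 n, dist_nonneg (x := (p n).1) (y := (p n).2)]
    have hTne : ∀ n, T (p n).1 ≠ T (p n).2 := fun n =>
      dist_pos.mp (hε.trans (hp3 n))
    have hFlow : ∀ n, L ≤ F (dist (T (p n).1) (T (p n).2)) := by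
      intro n
      refine csInf_le hs0bdd ⟨dist (T (p n).1) (T (p n).2), ⟨hp3 n, ?_⟩, rfl⟩
      have h1 : tn n < ε + 1 := by
        have := hp2 n
        have h2 : (1 : ℝ)/(n+1) ≤ 1 := by
          rw [div_le_one (by positivity)]; linarith [Nat.cast_nonneg (α := ℝ) n]
        rw [htn]; linarith
      linarith [hdTlt n]
    have hcb : IsCoboundedUnder (· ≤ ·) atTop (fun n => φ (tn n)) :=
      isCoboundedUnder_le_of_le atTop (x := 0)
        (fun n => (hφpos _ (hε.trans (hp1 n))).le)
    have hkey : ∀ s ∈ Set.Ioo ε (ε+1), limsup (fun n => φ (tn n)) atTop ≤ F s - L := by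
      intro s hs
      refine limsup_le_of_le hcb ?_
      have hev : ∀ᶠ n in atTop, tn n < s := htendn.eventually (eventually_lt_nhds hs.1)
      filter_upwards [hev] with n hn
      have h1 := hcontr _ _ (hTne n)
      have h2 : F (tn n) ≤ F s := hF (Set.mem_Ioi.mpr (hε.trans (hp1 n)))
        (Set.mem_Ioi.mpr (hε.trans hs.1)) hn.le
      have h3 := hFlow n
      rw [htn] at *
      linarith
    have hfinal : L + limsup (fun n => φ (tn n)) atTop ≤ L := by
      rw [hL, hs0]
      refine le_csInf hs0ne ?_
      rintro _ ⟨s, hs, rfl⟩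
      have h := hkey s hs
      have hLe : L = sInf (F '' Set.Ioo ε (ε + 1)) := hL
      rw [← hLe]
      linarith
    linarith
  exact cjmp_picard hc hmw
end

section
/- Let (X,d) be a complete metric space and T : X → X be a (φ,F)-contraction. Suppose T is contractive, F : (0,∞) → ℝ has a finite right-hand limit at every point of (0,∞), and φ : (0,∞) → (0,∞) satisfies condition (iii'). Then T is a CJMP-contraction. -/
open Filter Topology

/-!
If the Matkowski–Węgrzyk condition failed at `ε`, there would be pairs with `d(xₙ, yₙ) ↓ ε` and
`ε < d(Txₙ, Tyₙ) ≤ d(xₙ, yₙ)`. Both distance sequences then approach `ε` from the right, so the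
right limit of `F` at `ε` makes `F(d(xₙ, yₙ)) - F(d(Txₙ, Tyₙ)) → 0`; the contraction inequality
squeezes `φ(d(xₙ, yₙ))` to `0`, contradicting (iii').
-/

theorem tendsto_sub_comp_of_tendsto_nhdsGT {α : Type*} {l : Filter α} {F : ℝ → ℝ} {t L : ℝ}
    (hF : Tendsto F (𝓝[>] t) (𝓝 L)) {u v : α → ℝ} (hu : Tendsto u l (𝓝 t))
    (hv : Tendsto v l (𝓝 t)) (hut : ∀ᶠ a in l, t < u a) (hvt : ∀ᶠ a in l, t < v a) :
    Tendsto (fun a => F (u a) - F (v a)) l (𝓝 0) := by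
  simpa using (hF.comp (tendsto_nhdsWithin_of_tendsto_nhds_of_eventually_within _ hu hut)).sub
    (hF.comp (tendsto_nhdsWithin_of_tendsto_nhds_of_eventually_within _ hv hvt))

section

variable {X : Type*} [MetricSpace X] {T : X → X}

theorem Contractive.dist_le_s11 (hT : Contractive T) (x y : X) : dist (T x) (T y) ≤ dist x y := by
  rcases eq_or_ne x y with rfl | hxy
  · simp
  · exact (hT x y hxy).le

theorem exists_seq_of_not_mwCondition (h : ¬ MWCondition T) :
    ∃ ε > (0 : ℝ), ∃ x y : ℕ → X, (∀ n, ε < dist (x n) (y n)) ∧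
      Tendsto (fun n => dist (x n) (y n)) atTop (𝓝 ε) ∧ ∀ n, ε < dist (T (x n)) (T (y n)) := by
  unfold MWCondition at h
  push Not at h
  obtain ⟨ε, hε, h⟩ := h
  choose x y hgt hlt hT using fun n : ℕ => h (1 / (n + 1 : ℝ)) Nat.one_div_pos_of_nat
  have hδ : Tendsto (fun n : ℕ => ε + 1 / (n + 1 : ℝ)) atTop (𝓝 ε) := by
    simpa using tendsto_const_nhds.add (tendsto_one_div_add_atTop_nhds_zero_nat (𝕜 := ℝ))
  exact ⟨ε, hε, x, y, hgt, tendsto_of_tendsto_of_tendsto_of_le_of_le tendsto_const_nhds hδ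
    (fun n => (hgt n).le) (fun n => (hlt n).le), hT⟩

theorem Contractive.tendsto_dist_image (hT : Contractive T) {ε : ℝ} {x y : ℕ → X}
    (hxy : Tendsto (fun n => dist (x n) (y n)) atTop (𝓝 ε))
    (hTxy : ∀ n, ε < dist (T (x n)) (T (y n))) :
    Tendsto (fun n => dist (T (x n)) (T (y n))) atTop (𝓝 ε) :=
  tendsto_of_tendsto_of_tendsto_of_le_of_le tendsto_const_nhds hxy
    (fun n => (hTxy n).le) (fun n => hT.dist_le_s11 (x n) (y n))

end

theorem stmt_11_general {X : Type*} [MetricSpace X] (T : X → X)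
    (hT : Contractive T) (F φ : ℝ → ℝ) (hφpos : ∀ t > (0 : ℝ), 0 < φ t)
    (hF : ∀ t > (0 : ℝ), ∃ L : ℝ, Tendsto F (𝓝[>] t) (𝓝 L))
    (hiii : ∀ t > (0 : ℝ), ∀ tn : ℕ → ℝ, (∀ n, t < tn n) → Tendsto tn atTop (𝓝 t) →
      0 < limsup (fun n => φ (tn n)) atTop)
    (hcontr : ∀ x y : X, T x ≠ T y →
      φ (dist x y) + F (dist (T x) (T y)) ≤ F (dist x y)) :
    IsCJMP T := by
  refine ⟨hT, ?_⟩
  by_contra hMW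
  obtain ⟨ε, hε, x, y, hgt, hxy, hTgt⟩ := exists_seq_of_not_mwCondition hMW
  obtain ⟨L, hL⟩ := hF ε hε
  have hgap := tendsto_sub_comp_of_tendsto_nhdsGT hL hxy (hT.tendsto_dist_image hxy hTgt)
    (.of_forall hgt) (.of_forall hTgt)
  have hφle : ∀ n, φ (dist (x n) (y n)) ≤
      F (dist (x n) (y n)) - F (dist (T (x n)) (T (y n))) := fun n => by
    linarith [hcontr (x n) (y n) (dist_pos.1 (hε.trans (hTgt n)))]
  have hφ0 : Tendsto (fun n => φ (dist (x n) (y n))) atTop (𝓝 0) :=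
    squeeze_zero (fun n => (hφpos _ (hε.trans (hgt n))).le) hφle hgap
  exact (hiii ε hε _ hgt hxy).ne' hφ0.limsup_eq

theorem stmt_11 {X : Type*} [MetricSpace X] [CompleteSpace X] (T : X → X)
    (hT : Contractive T) (F φ : ℝ → ℝ) (hφpos : ∀ t > (0 : ℝ), 0 < φ t)
    (hF : ∀ t > (0 : ℝ), ∃ L : ℝ, Tendsto F (𝓝[>] t) (𝓝 L))
    (hiii : ∀ t > (0 : ℝ), ∀ tn : ℕ → ℝ, (∀ n, t < tn n) → Tendsto tn atTop (𝓝 t) →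
      0 < limsup (fun n => φ (tn n)) atTop)
    (hcontr : ∀ x y : X, T x ≠ T y →
      φ (dist x y) + F (dist (T x) (T y)) ≤ F (dist x y)) :
    IsCJMP T :=
  stmt_11_general T hT F φ hφpos hF hiii hcontr
end

section
/- Let (X,d) be a complete metric space and T : X → X be a (φ,F)-contraction such that F : (0,∞) → ℝ is nondecreasing and φ : (0,∞) → (0,∞) satisfies condition (iii''): for every strictly decreasing sequence (t_n) ⊂ (0,∞), if φ(t_n) → 0 then t_n → 0. Then T is a Picard operator. -/
open Filter Topology

section Aux

variable {X : Type*} [MetricSpace X] (T : X → X) (F φ : ℝ → ℝ)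

private lemma aux_lt (hφpos : ∀ t > (0 : ℝ), 0 < φ t)
    (hF : MonotoneOn F (Set.Ioi 0))
    (hcontr : ∀ x y : X, T x ≠ T y →
      φ (dist x y) + F (dist (T x) (T y)) ≤ F (dist x y)) :
    ∀ x y : X, T x ≠ T y → dist (T x) (T y) < dist x y := by
  intro x y h
  have hxy : x ≠ y := fun e => h (by rw [e])
  have hd : 0 < dist x y := dist_pos.2 hxy
  have hdT : 0 < dist (T x) (T y) := dist_pos.2 h
  by_contra hge
  push_neg at hge
  have h1 : F (dist x y) ≤ F (dist (T x) (T y)) :=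
    hF (Set.mem_Ioi.2 hd) (Set.mem_Ioi.2 hdT) hge
  have h2 := hcontr x y h
  have h3 := hφpos _ hd
  linarith

private lemma aux_mw (hφpos : ∀ t > (0 : ℝ), 0 < φ t)
    (hF : MonotoneOn F (Set.Ioi 0))
    (hiii : ∀ tn : ℕ → ℝ, (∀ n, 0 < tn n) → StrictAnti tn →
      Tendsto (fun n => φ (tn n)) atTop (𝓝 0) → Tendsto tn atTop (𝓝 0))
    (hcontr : ∀ x y : X, T x ≠ T y →
      φ (dist x y) + F (dist (T x) (T y)) ≤ F (dist x y)) :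
    MWCondition T := by
  by_contra h
  simp only [MWCondition] at h
  push_neg at h
  obtain ⟨ε, hε, h⟩ := h
  -- pairs with both distance and image-distance above ε
  set Q : X × X → Prop := fun p => ε < dist p.1 p.2 ∧ ε < dist (T p.1) (T p.2) with hQ
  have step : ∀ p : {p : X × X // Q p}, ∃ q : {p : X × X // Q p},
      dist q.1.1 q.1.2 < dist p.1.1 p.1.2 ∧
      dist q.1.1 q.1.2 < dist (T p.1.1) (T p.1.2) := by
    rintro ⟨⟨x, y⟩, hx1, hx2⟩
    have hδ : 0 < min (dist x y - ε) (dist (T x) (T y) - ε) :=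
      lt_min (by linarith) (by linarith)
    obtain ⟨x', y', h1, h2, h3⟩ := h _ hδ
    refine ⟨⟨(x', y'), h1, h3⟩, ?_, ?_⟩
    · calc dist x' y' < ε + min (dist x y - ε) (dist (T x) (T y) - ε) := h2
        _ ≤ ε + (dist x y - ε) := by gcongr; exact min_le_left _ _
        _ = dist x y := by ring
    · calc dist x' y' < ε + min (dist x y - ε) (dist (T x) (T y) - ε) := h2
        _ ≤ ε + (dist (T x) (T y) - ε) := by gcongr; exact min_le_right _ _
        _ = dist (T x) (T y) := by ring
  choose f hf1 hf2 using step
  obtain ⟨x0, y0, g1, _, g3⟩ := h 1 one_pos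
  set s0 : {p : X × X // Q p} := ⟨(x0, y0), g1, g3⟩ with hs0
  set sq : ℕ → {p : X × X // Q p} := fun n => f^[n] s0 with hsq
  have hsq_succ : ∀ n, sq (n + 1) = f (sq n) := fun n => Function.iterate_succ_apply' f n s0
  set t : ℕ → ℝ := fun n => dist (sq n).1.1 (sq n).1.2 with ht
  have htε : ∀ n, ε < t n := fun n => (sq n).2.1
  have htpos : ∀ n, 0 < t n := fun n => hε.trans (htε n)
  have htanti : StrictAnti t := by
    apply strictAnti_nat_of_succ_lt
    intro n
    have := hf1 (sq n)
    rw [← hsq_succ n] at this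
    exact this
  have hTne : ∀ n, T (sq n).1.1 ≠ T (sq n).1.2 := fun n =>
    dist_pos.1 (hε.trans (sq n).2.2)
  have hφt : ∀ n, φ (t n) ≤ F (t n) - F (t (n + 1)) := by
    intro n
    have h1 := hcontr (sq n).1.1 (sq n).1.2 (hTne n)
    have h2 : t (n + 1) ≤ dist (T (sq n).1.1) (T (sq n).1.2) := by
      have := hf2 (sq n); rw [← hsq_succ n] at this; exact this.le
    have h3 : F (t (n + 1)) ≤ F (dist (T (sq n).1.1) (T (sq n).1.2)) :=
      hF (Set.mem_Ioi.2 (htpos (n + 1))) (Set.mem_Ioi.2 (hε.trans (sq n).2.2)) h2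
    linarith
  have hFanti : Antitone (fun n => F (t n)) := by
    apply antitone_nat_of_succ_le
    intro n
    have := hφt n
    have := hφpos _ (htpos n)
    linarith
  have hFbdd : BddBelow (Set.range fun n => F (t n)) := by
    refine ⟨F ε, ?_⟩
    rintro _ ⟨n, rfl⟩
    exact hF (Set.mem_Ioi.2 hε) (Set.mem_Ioi.2 (htpos n)) (htε n).le
  have hFconv : Tendsto (fun n => F (t n)) atTop (𝓝 (⨅ n, F (t n))) :=
    tendsto_atTop_ciInf hFanti hFbdd
  have hdiff : Tendsto (fun n => F (t n) - F (t (n + 1))) atTop (𝓝 0) := by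
    have h2 : Tendsto (fun n => F (t (n + 1))) atTop (𝓝 (⨅ n, F (t n))) :=
      hFconv.comp (tendsto_add_atTop_nat 1)
    have := hFconv.sub h2
    simpa using this
  have hφ0 : Tendsto (fun n => φ (t n)) atTop (𝓝 0) :=
    squeeze_zero (fun n => (hφpos _ (htpos n)).le) hφt hdiff
  have ht0 : Tendsto t atTop (𝓝 0) := hiii t htpos htanti hφ0
  have : ε ≤ 0 := ge_of_tendsto ht0 (Eventually.of_forall fun n => (htε n).le)
  linarith

end Aux

theorem stmt_13 {X : Type*} [MetricSpace X] [CompleteSpace X] [Nonempty X] (T : X → X)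
    (F φ : ℝ → ℝ) (hφpos : ∀ t > (0 : ℝ), 0 < φ t)
    (hF : MonotoneOn F (Set.Ioi 0))
    (hiii : ∀ tn : ℕ → ℝ, (∀ n, 0 < tn n) → StrictAnti tn →
      Tendsto (fun n => φ (tn n)) atTop (𝓝 0) → Tendsto tn atTop (𝓝 0))
    (hcontr : ∀ x y : X, T x ≠ T y →
      φ (dist x y) + F (dist (T x) (T y)) ≤ F (dist x y)) :
    IsPicardOperator T := by
  have hlt := aux_lt T F φ hφpos hF hcontr
  have hle : ∀ x y : X, dist (T x) (T y) ≤ dist x y := by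
    intro x y
    by_cases h : T x = T y
    · rw [h, dist_self]; exact dist_nonneg
    · exact (hlt x y h).le
  have hmw := aux_mw T F φ hφpos hF hiii hcontr
  -- every orbit converges to a fixed point
  have key : ∀ x : X, ∃ w : X, T w = w ∧ Tendsto (fun n => T^[n] x) atTop (𝓝 w) := by
    intro x
    by_cases hfix : ∃ n, T (T^[n] x) = T^[n] x
    · obtain ⟨n, hn⟩ := hfix
      refine ⟨T^[n] x, hn, ?_⟩
      have hconst : ∀ m, n ≤ m → T^[m] x = T^[n] x := by
        intro m hm
        induction m, hm using Nat.le_induction with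
        | base => rfl
        | succ m hm ih => rw [Function.iterate_succ_apply', ih, hn]
      refine Tendsto.congr' ?_ tendsto_const_nhds
      filter_upwards [eventually_ge_atTop n] with m hm
      exact (hconst m hm).symm
    · push_neg at hfix
      set s : ℕ → X := fun n => T^[n] x with hs
      have hs_succ : ∀ n, s (n + 1) = T (s n) := fun n => Function.iterate_succ_apply' T n x
      set a : ℕ → ℝ := fun n => dist (s n) (s (n + 1)) with ha
      have hane : ∀ n, s n ≠ s (n + 1) := by
        intro n h
        exact hfix n (by rw [← hs_succ n, ← h])
      have hTne : ∀ n, T (s n) ≠ T (s (n + 1)) := by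
        intro n
        rw [← hs_succ n, ← hs_succ (n + 1)]
        exact hane (n + 1)
      have hapos : ∀ n, 0 < a n := fun n => dist_pos.2 (hane n)
      have haanti : StrictAnti a := by
        apply strictAnti_nat_of_succ_lt
        intro n
        have heq : a (n + 1) = dist (T (s n)) (T (s (n + 1))) := by
          show dist (s (n + 1)) (s (n + 1 + 1)) = _
          rw [hs_succ (n + 1)]
          congr 1
          exact hs_succ n
        rw [heq]
        exact hlt _ _ (hTne n)
      have hφa : ∀ n, φ (a n) ≤ F (a n) - F (a (n + 1)) := by
        intro n
        have h1 := hcontr (s n) (s (n + 1)) (hTne n)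
        have h2 : a (n + 1) = dist (T (s n)) (T (s (n + 1))) := by
          show dist (s (n + 1)) (s (n + 1 + 1)) = _
          rw [hs_succ (n + 1)]
          congr 1
          exact hs_succ n
        rw [← h2] at h1
        linarith
      have ha0 : Tendsto a atTop (𝓝 0) := by
        have habdd : BddBelow (Set.range a) := ⟨0, by rintro _ ⟨n, rfl⟩; exact (hapos n).le⟩
        have haconv : Tendsto a atTop (𝓝 (⨅ n, a n)) :=
          tendsto_atTop_ciInf haanti.antitone habdd
        have hδ0 : (⨅ n, a n) = 0 := by
          by_contra hδ
          have hδpos : 0 < ⨅ n, a n :=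
            lt_of_le_of_ne (le_ciInf fun n => (hapos n).le) (Ne.symm hδ)
          have hδle : ∀ n, (⨅ n, a n) ≤ a n := fun n => ciInf_le habdd n
          have hFanti : Antitone (fun n => F (a n)) := by
            apply antitone_nat_of_succ_le
            intro n
            have := hφa n
            have := hφpos _ (hapos n)
            linarith
          have hFbdd : BddBelow (Set.range fun n => F (a n)) := by
            refine ⟨F (⨅ n, a n), ?_⟩
            rintro _ ⟨n, rfl⟩
            exact hF (Set.mem_Ioi.2 hδpos) (Set.mem_Ioi.2 (hapos n)) (hδle n)
          have hFconv : Tendsto (fun n => F (a n)) atTop (𝓝 (⨅ n, F (a n))) :=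
            tendsto_atTop_ciInf hFanti hFbdd
          have hdiff : Tendsto (fun n => F (a n) - F (a (n + 1))) atTop (𝓝 0) := by
            have h2 : Tendsto (fun n => F (a (n + 1))) atTop (𝓝 (⨅ n, F (a n))) :=
              hFconv.comp (tendsto_add_atTop_nat 1)
            have := hFconv.sub h2
            simpa using this
          have hφ0 : Tendsto (fun n => φ (a n)) atTop (𝓝 0) :=
            squeeze_zero (fun n => (hφpos _ (hapos n)).le) hφa hdiff
          have := hiii a hapos haanti hφ0
          have := tendsto_nhds_unique haconv this
          linarith
        rwa [hδ0] at haconv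
      -- the orbit is Cauchy
      have hcauchy : CauchySeq s := by
        rw [Metric.cauchySeq_iff']
        intro ε hε
        obtain ⟨δ, hδ, hmwε⟩ := hmw (ε / 4) (by linarith)
        set δ' : ℝ := min δ (ε / 4) with hδ'def
        have hδ' : 0 < δ' := lt_min hδ (by linarith)
        obtain ⟨N, hN⟩ := (Metric.tendsto_atTop.1 ha0) δ' hδ'
        have haN : a N < δ' := by
          have := hN N le_rfl
          rwa [Real.dist_eq, sub_zero, abs_of_pos (hapos N)] at this
        have claim : ∀ k, dist (s (N + k)) (s N) < ε / 4 + δ' := by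
          intro k
          induction k with
          | zero => simp only [Nat.add_zero, dist_self]; positivity
          | succ k ih =>
            have h1 : dist (s (N + k + 1)) (s (N + 1)) ≤ ε / 4 := by
              rw [hs_succ (N + k), hs_succ N]
              rcases le_or_gt (dist (s (N + k)) (s N)) (ε / 4) with hc | hc
              · exact (hle _ _).trans hc
              · refine hmwε _ _ hc ?_
                calc dist (s (N + k)) (s N) < ε / 4 + δ' := ih
                  _ ≤ ε / 4 + δ := by gcongr; exact min_le_left _ _
            calc dist (s (N + (k + 1))) (s N)
                ≤ dist (s (N + k + 1)) (s (N + 1)) + dist (s (N + 1)) (s N) := by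
                  rw [show N + (k + 1) = N + k + 1 from rfl]; exact dist_triangle _ _ _
              _ = dist (s (N + k + 1)) (s (N + 1)) + a N := by rw [dist_comm (s (N + 1)) (s N)]
              _ < ε / 4 + δ' := by
                  have := haN
                  linarith
        refine ⟨N, fun n hn => ?_⟩
        have := claim (n - N)
        rw [Nat.add_sub_cancel' hn] at this
        calc dist (s n) (s N) < ε / 4 + δ' := this
          _ ≤ ε / 4 + ε / 4 := by gcongr; exact min_le_right _ _
          _ < ε := by linarith
      obtain ⟨w, hw⟩ := cauchySeq_tendsto_of_complete hcauchy
      refine ⟨w, ?_, hw⟩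
      -- `w` is a fixed point
      have hdist0 : Tendsto (fun n => dist (s n) w) atTop (𝓝 0) :=
        tendsto_iff_dist_tendsto_zero.1 hw
      have hTs : Tendsto (fun n => s (n + 1)) atTop (𝓝 (T w)) := by
        rw [tendsto_iff_dist_tendsto_zero]
        refine squeeze_zero (fun n => dist_nonneg) (fun n => ?_) hdist0
        rw [hs_succ n]
        exact hle (s n) w
      have hsw : Tendsto (fun n => s (n + 1)) atTop (𝓝 w) :=
        hw.comp (tendsto_add_atTop_nat 1)
      exact tendsto_nhds_unique hTs hsw
  obtain ⟨x0⟩ := (inferInstance : Nonempty X)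
  obtain ⟨u, hu, hux⟩ := key x0
  have huniq : ∀ v : X, T v = v → v = u := by
    intro v hv
    by_contra hne
    have hTne : T v ≠ T u := by rw [hv, hu]; exact hne
    have := hlt v u hTne
    rw [hv, hu] at this
    exact lt_irrefl _ this
  refine ⟨u, hu, huniq, fun x => ?_⟩
  obtain ⟨w, hw, hwt⟩ := key x
  rwa [huniq w hw] at hwt
end

section
/- Let (X,d) be a complete metric space, α ∈ [0,1) a constant, and F : (0,∞) → ℝ a function such that (C'_1) for all t,s ∈ (0,∞), t ≤ s implies α·F(t) < F(s), and (C'_2) F has a finite right-hand limit at every point t ∈ (0,∞) and this right-hand limit F(t+0) is positive for every t > 0. If T : X → X satisfies F(d(Tx,Ty)) ≤ α·F(d(x,y)) for all x,y ∈ X with Tx ≠ Ty, then T is a Picard operator. -/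
open Filter Topology

-- nonexpansive
lemma aux_nonexp {X : Type*} [MetricSpace X] {T : X → X} (hc : Contractive T) :
    ∀ x y : X, dist (T x) (T y) ≤ dist x y := by
  intro x y
  by_cases hxy : x = y
  · simp [hxy]
  · exact (hc x y hxy).le

lemma aux_dist_iter_zero {X : Type*} [MetricSpace X] {T : X → X}
    (hc : Contractive T) (hmw : MWCondition T) (x : X) :
    Tendsto (fun n => dist (T^[n] x) (T^[n+1] x)) atTop (𝓝 0) := by
  set c : ℕ → ℝ := fun n => dist (T^[n] x) (T^[n+1] x) with hcdef
  have hanti : Antitone c := by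
    apply antitone_nat_of_succ_le
    intro n
    have : c (n+1) = dist (T (T^[n] x)) (T (T^[n+1] x)) := by
      simp [hcdef, Function.iterate_succ_apply']
    rw [this]
    exact aux_nonexp hc _ _
  have hbdd : BddBelow (Set.range c) := ⟨0, by rintro _ ⟨n, rfl⟩; exact dist_nonneg⟩
  have htend : Tendsto c atTop (𝓝 (⨅ n, c n)) := tendsto_atTop_ciInf hanti hbdd
  set L := ⨅ n, c n with hL
  have hL0 : 0 ≤ L := le_ciInf fun n => dist_nonneg
  rcases eq_or_lt_of_le hL0 with h | h
  · rwa [← h] at htend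
  · exfalso
    obtain ⟨δ, hδ0, hδ⟩ := hmw L h
    obtain ⟨n, hn⟩ : ∃ n, c n < L + δ := exists_lt_of_ciInf_lt (by linarith)
    have hLle : ∀ m, L ≤ c m := fun m => ciInf_le hbdd m
    -- get m with c m = L
    have key : ∃ m, c m = L := by
      rcases le_or_gt (c n) L with h1 | h1
      · exact ⟨n, le_antisymm h1 (hLle n)⟩
      · refine ⟨n+1, le_antisymm ?_ (hLle (n+1))⟩
        have : c (n+1) = dist (T (T^[n] x)) (T (T^[n+1] x)) := by
          simp [hcdef, Function.iterate_succ_apply']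
        rw [this]
        exact hδ _ _ h1 hn
    obtain ⟨m, hm⟩ := key
    have hne : T^[m] x ≠ T^[m+1] x := by
      intro he
      have : c m = 0 := by simp [hcdef, he]
      rw [hm] at this; linarith
    have : c (m+1) < c m := by
      have h2 : c (m+1) = dist (T (T^[m] x)) (T (T^[m+1] x)) := by
        simp [hcdef, Function.iterate_succ_apply']
      rw [h2]
      exact hc _ _ hne
    have := hLle (m+1)
    rw [hm] at *
    linarith

lemma aux_cauchy {X : Type*} [MetricSpace X] {T : X → X}
    (hc : Contractive T) (hmw : MWCondition T) (x : X) :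
    CauchySeq (fun n => T^[n] x) := by
  rw [Metric.cauchySeq_iff']
  intro ε hε
  obtain ⟨δ, hδ0, hδ⟩ := hmw (ε/2) (by linarith)
  set δ' := min δ (ε/2) with hδ'def
  have hδ'0 : 0 < δ' := lt_min hδ0 (by linarith)
  obtain ⟨N, hN⟩ := (Metric.tendsto_atTop.mp (aux_dist_iter_zero hc hmw x) δ' hδ'0) 
  have hcN : dist (T^[N] x) (T^[N+1] x) < δ' := by
    have := hN N le_rfl
    rwa [Real.dist_eq, sub_zero, abs_of_nonneg dist_nonneg] at this
  have claim : ∀ k, dist (T^[N+k] x) (T^[N] x) < ε/2 + δ' := by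
    intro k
    induction k with
    | zero => simpa using (by linarith : (0:ℝ) < ε/2 + δ')
    | succ k ih =>
      have hstep : dist (T^[N+k+1] x) (T^[N+1] x) ≤ ε/2 := by
        have e1 : T^[N+k+1] x = T (T^[N+k] x) := by
          rw [Function.iterate_succ_apply']
        have e2 : T^[N+1] x = T (T^[N] x) := by
          rw [Function.iterate_succ_apply']
        rw [e1, e2]
        rcases le_or_gt (dist (T^[N+k] x) (T^[N] x)) (ε/2) with h1 | h1
        · exact le_trans (aux_nonexp hc _ _) h1
        · exact hδ _ _ h1 (by
            have : δ' ≤ δ := min_le_left _ _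
            linarith [ih])
      calc dist (T^[N+(k+1)] x) (T^[N] x)
          ≤ dist (T^[N+k+1] x) (T^[N+1] x) + dist (T^[N+1] x) (T^[N] x) := by
            rw [show N+(k+1) = N+k+1 from rfl]; exact dist_triangle _ _ _
        _ < ε/2 + δ' := by
            rw [dist_comm (T^[N+1] x)] at *
            linarith [hstep, hcN]
  refine ⟨N, fun n hn => ?_⟩
  have : n = N + (n - N) := by omega
  rw [this]
  have := claim (n - N)
  have hδ'le : δ' ≤ ε/2 := min_le_right _ _
  linarith

lemma picard_of_cjmp {X : Type*} [MetricSpace X] [CompleteSpace X] [Nonempty X]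
    (T : X → X) (hc : Contractive T) (hmw : MWCondition T) : IsPicardOperator T := by
  have hTcont : Continuous T := by
    have : LipschitzWith 1 T := by
      apply LipschitzWith.of_dist_le_mul
      intro x y
      rw [NNReal.coe_one, one_mul]
      exact aux_nonexp hc x y
    exact this.continuous
  have hlim : ∀ x : X, ∃ u : X, T u = u ∧ Tendsto (fun n => T^[n] x) atTop (𝓝 u) := by
    intro x
    obtain ⟨u, hu⟩ := cauchySeq_tendsto_of_complete (aux_cauchy hc hmw x)
    refine ⟨u, ?_, hu⟩
    have h1 : Tendsto (fun n => T^[n+1] x) atTop (𝓝 u) :=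
      hu.comp (tendsto_add_atTop_nat 1)
    have h2 : Tendsto (fun n => T (T^[n] x)) atTop (𝓝 (T u)) :=
      (hTcont.tendsto u).comp hu
    have : (fun n => T^[n+1] x) = fun n => T (T^[n] x) := by
      funext n; rw [Function.iterate_succ_apply']
    rw [this] at h1
    exact tendsto_nhds_unique h2 h1
  have huniq : ∀ u v : X, T u = u → T v = v → u = v := by
    intro u v hu hv
    by_contra hne
    have := hc u v hne
    rw [hu, hv] at this
    exact lt_irrefl _ this
  obtain ⟨x₀⟩ := (inferInstance : Nonempty X)
  obtain ⟨u, hu, hconv⟩ := hlim x₀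
  refine ⟨u, hu, fun v hv => huniq v u hv hu, fun x => ?_⟩
  obtain ⟨w, hw, hwconv⟩ := hlim x
  rwa [huniq w u hw hu] at hwconv

theorem stmt_15 {X : Type*} [MetricSpace X] [CompleteSpace X] [Nonempty X] (T : X → X)
    (α : ℝ) (hα0 : 0 ≤ α) (hα1 : α < 1) (F : ℝ → ℝ)
    (hC1 : ∀ t s : ℝ, 0 < t → t ≤ s → α * F t < F s)
    (hC2 : ∀ t > (0 : ℝ), ∃ L : ℝ, Tendsto F (𝓝[>] t) (𝓝 L) ∧ 0 < L)
    (hcontr : ∀ x y : X, T x ≠ T y → F (dist (T x) (T y)) ≤ α * F (dist x y)) :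
    IsPicardOperator T := by
  have hc : Contractive T := by
    intro x y hxy
    by_cases hT : T x = T y
    · rw [hT]
      simpa using dist_pos.mpr hxy
    · by_contra hge
      push_neg at hge
      have h1 := hcontr x y hT
      have h2 := hC1 (dist x y) (dist (T x) (T y)) (dist_pos.mpr hxy) hge
      linarith
  have hmw : MWCondition T := by
    intro ε hε
    obtain ⟨L, hL, hLpos⟩ := hC2 ε hε
    have hr : 0 < (1-α)*L/2 := by nlinarith
    have hev : F ⁻¹' Metric.ball L ((1-α)*L/2) ∈ 𝓝[>] ε :=
      hL (Metric.ball_mem_nhds L hr)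
    rw [mem_nhdsGT_iff_exists_Ioo_subset] at hev
    obtain ⟨b, hb, hsub⟩ := hev
    refine ⟨b - ε, by simpa using hb, fun x y h1 h2 => ?_⟩
    by_contra h3
    push_neg at h3
    have hxy : x ≠ y := by
      intro he; rw [he] at h1; simp at h1; linarith
    have hlt : dist (T x) (T y) < dist x y := hc x y hxy
    have hTne : T x ≠ T y := by
      intro he; rw [he] at h3; simp at h3; linarith
    have hmem1 : dist x y ∈ Set.Ioo ε b := ⟨h1, by linarith⟩
    have hmem2 : dist (T x) (T y) ∈ Set.Ioo ε b := ⟨h3, by linarith⟩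
    have hb1 := hsub hmem1
    have hb2 := hsub hmem2
    simp only [Set.mem_preimage, Metric.mem_ball, Real.dist_eq] at hb1 hb2
    have := hcontr x y hTne
    have ha1 : F (dist x y) < L + (1-α)*L/2 := by
      have := abs_lt.mp hb1; linarith [this.2]
    have ha2 : L - (1-α)*L/2 < F (dist (T x) (T y)) := by
      have := abs_lt.mp hb2; linarith [this.1]
    nlinarith [sq_nonneg (α - 1)]
  exact picard_of_cjmp T hc hmw
end

section
/- Let (X,d) be a complete metric space, α ∈ [0,1) a constant, T : X → X a mapping, and F : (0,∞) → ℝ a function such that (1) F is nondecreasing, (2) F(s) > 0 for all s > 0, and (3) F(d(Tx,Ty)) ≤ α·F(d(x,y)) for all x,y ∈ X with Tx ≠ Ty. Then T is a Picard operator. -/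
open Filter Topology

theorem stmt_16 {X : Type*} [MetricSpace X] [CompleteSpace X] [Nonempty X] (T : X → X)
    (α : ℝ) (hα0 : 0 ≤ α) (hα1 : α < 1) (F : ℝ → ℝ)
    (hF : MonotoneOn F (Set.Ioi 0))
    (hFpos : ∀ s > (0 : ℝ), 0 < F s)
    (hcontr : ∀ x y : X, T x ≠ T y → F (dist (T x) (T y)) ≤ α * F (dist x y)) :
    IsPicardOperator T := by
  -- Replace α by β = max α (1/2) so that 0 < β < 1.
  set β := max α (1/2) with hβdef
  have hβ0 : (0:ℝ) < β := lt_of_lt_of_le (by norm_num) (le_max_right _ _)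
  have hβ1 : β < 1 := max_lt hα1 (by norm_num)
  have hcontr' : ∀ x y : X, T x ≠ T y → F (dist (T x) (T y)) ≤ β * F (dist x y) := by
    intro x y h
    have hxy : x ≠ y := fun e => h (by rw [e])
    refine (hcontr x y h).trans (mul_le_mul_of_nonneg_right (le_max_left _ _) ?_)
    exact (hFpos _ (dist_pos.mpr hxy)).le
  -- T is contractive.
  have hcon : Contractive T := by
    intro x y hxy
    have hd : 0 < dist x y := dist_pos.mpr hxy
    by_cases h : T x = T y
    · rw [h]; simpa using hd
    · have hTd : 0 < dist (T x) (T y) := dist_pos.mpr h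
      by_contra hle
      push_neg at hle
      have h1 : F (dist x y) ≤ F (dist (T x) (T y)) :=
        hF (Set.mem_Ioi.mpr hd) (Set.mem_Ioi.mpr hTd) hle
      have h2 := hcontr' x y h
      nlinarith [hFpos _ hd]
  -- T is nonexpansive.
  have hne : ∀ x y : X, dist (T x) (T y) ≤ dist x y := by
    intro x y
    by_cases hxy : x = y
    · simp [hxy]
    · exact (hcon x y hxy).le
  -- The Matkowski–Węgrzyk condition.
  have hmw : MWCondition T := by
    intro ε hε
    set c := sInf (F '' Set.Ioi ε) with hc
    have hbdd : BddBelow (F '' Set.Ioi ε) := by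
      refine ⟨F ε, ?_⟩
      rintro _ ⟨s, hs, rfl⟩
      exact hF (Set.mem_Ioi.mpr hε) (Set.mem_Ioi.mpr (hε.trans hs)) hs.le
    have hnonempty : (F '' Set.Ioi ε).Nonempty := ⟨F (ε+1), ε+1, by simp [hε], rfl⟩
    have hcF : F ε ≤ c := by
      refine le_csInf hnonempty ?_
      rintro _ ⟨s, hs, rfl⟩
      exact hF (Set.mem_Ioi.mpr hε) (Set.mem_Ioi.mpr (hε.trans hs)) hs.le
    have hcpos : 0 < c := lt_of_lt_of_le (hFpos ε hε) hcF
    have hclt : c < c / β := by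
      rw [lt_div_iff₀ hβ0]
      nlinarith
    obtain ⟨_, ⟨s, hs, rfl⟩, hsF⟩ := exists_lt_of_csInf_lt hnonempty hclt
    refine ⟨s - ε, sub_pos.mpr hs, ?_⟩
    intro x y h1 h2
    have hds : dist x y ≤ s := by linarith
    by_cases hT : T x = T y
    · rw [hT]; simpa using hε.le
    · by_contra hgt
      push_neg at hgt
      have h3 : c ≤ F (dist (T x) (T y)) := csInf_le hbdd ⟨_, hgt, rfl⟩
      have h4 : F (dist x y) ≤ F s :=
        hF (Set.mem_Ioi.mpr (hε.trans h1)) (Set.mem_Ioi.mpr (hε.trans hs)) hds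
      have h5 := hcontr' x y hT
      have h6 : β * F s < c := by
        rw [lt_div_iff₀ hβ0] at hsF
        linarith [hsF]
      nlinarith [hFpos (dist x y) (hε.trans h1)]
  -- Successive distances tend to 0.
  have hdtend : ∀ x : X, Tendsto (fun n => dist (T^[n] x) (T^[n+1] x)) atTop (𝓝 0) := by
    intro x
    set d : ℕ → ℝ := fun n => dist (T^[n] x) (T^[n+1] x) with hd
    have hdsucc : ∀ n, d (n+1) = dist (T (T^[n] x)) (T (T^[n+1] x)) := by
      intro n
      simp only [hd, Function.iterate_succ_apply']
    have hanti : ∀ n, d (n+1) ≤ d n := by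
      intro n
      rw [hdsucc n]
      exact hne _ _
    have hantitone : Antitone d := antitone_nat_of_succ_le hanti
    have key : ∀ ε > (0:ℝ), ∃ N, d N < ε := by
      intro ε hε
      by_contra hcon'
      push_neg at hcon'
      have hind : ∀ n, F (d n) ≤ β^n * F (d 0) := by
        intro n
        induction n with
        | zero => simp
        | succ n ih =>
          have hpos : (0:ℝ) < d (n+1) := lt_of_lt_of_le hε (hcon' (n+1))
          have hneq : T (T^[n] x) ≠ T (T^[n+1] x) := by
            rw [hdsucc n] at hpos
            exact dist_pos.mp hpos
          calc F (d (n+1)) = F (dist (T (T^[n] x)) (T (T^[n+1] x))) := by rw [hdsucc n]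
            _ ≤ β * F (dist (T^[n] x) (T^[n+1] x)) := hcontr' _ _ hneq
            _ = β * F (d n) := rfl
            _ ≤ β * (β^n * F (d 0)) := mul_le_mul_of_nonneg_left ih hβ0.le
            _ = β^(n+1) * F (d 0) := by ring
      have hd0 : 0 < F (d 0) := hFpos _ (lt_of_lt_of_le hε (hcon' 0))
      obtain ⟨n, hn⟩ := exists_pow_lt_of_lt_one (div_pos (hFpos ε hε) hd0) hβ1
      have hn' : β^n * F (d 0) < F ε := by
        rw [div_eq_mul_inv] at hn
        calc β^n * F (d 0) < F ε * (F (d 0))⁻¹ * F (d 0) :=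
              mul_lt_mul_of_pos_right hn hd0
          _ = F ε := by field_simp
      have hFd : F ε ≤ F (d n) :=
        hF (Set.mem_Ioi.mpr hε) (Set.mem_Ioi.mpr (lt_of_lt_of_le hε (hcon' n))) (hcon' n)
      linarith [hind n]
    rw [Metric.tendsto_atTop]
    intro ε hε
    obtain ⟨N, hN⟩ := key ε hε
    refine ⟨N, fun n hn => ?_⟩
    rw [Real.dist_eq, sub_zero, abs_of_nonneg dist_nonneg]
    exact lt_of_le_of_lt (hantitone hn) hN
  -- The sequence of iterates is Cauchy.
  have hcauchy : ∀ x : X, CauchySeq (fun n => T^[n] x) := by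
    intro x
    rw [Metric.cauchySeq_iff']
    intro ε hε
    obtain ⟨δ₀, hδ₀, hmwε⟩ := hmw (ε/2) (by positivity)
    set δ := min δ₀ (ε/2) with hδdef
    have hδ : 0 < δ := lt_min hδ₀ (by positivity)
    obtain ⟨N, hN⟩ := Metric.tendsto_atTop.mp (hdtend x) δ hδ
    have hdN : dist (T^[N] x) (T^[N+1] x) < δ := by
      have := hN N le_rfl
      rwa [Real.dist_eq, sub_zero, abs_of_nonneg dist_nonneg] at this
    have key : ∀ m, N ≤ m → dist (T^[N] x) (T^[m] x) < ε/2 + δ := by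
      intro m hm
      induction m, hm using Nat.le_induction with
      | base => simpa using by positivity
      | succ m hm ih =>
        have hstep : dist (T^[N+1] x) (T^[m+1] x) ≤ ε/2 := by
          rw [Function.iterate_succ_apply' T N x, Function.iterate_succ_apply' T m x]
          by_cases hc : dist (T^[N] x) (T^[m] x) ≤ ε/2
          · exact le_trans (hne _ _) hc
          · push_neg at hc
            refine hmwε _ _ hc ?_
            calc dist (T^[N] x) (T^[m] x) < ε/2 + δ := ih
              _ ≤ ε/2 + δ₀ := by
                  have := min_le_left δ₀ (ε/2)
                  linarith
        calc dist (T^[N] x) (T^[m+1] x)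
            ≤ dist (T^[N] x) (T^[N+1] x) + dist (T^[N+1] x) (T^[m+1] x) := dist_triangle _ _ _
          _ < δ + ε/2 := add_lt_add_of_lt_of_le hdN hstep
          _ = ε/2 + δ := by ring
    refine ⟨N, fun n hn => ?_⟩
    rw [dist_comm]
    calc dist (T^[N] x) (T^[n] x) < ε/2 + δ := key n hn
      _ ≤ ε/2 + ε/2 := by
          have := min_le_right δ₀ (ε/2)
          linarith
      _ = ε := by ring
  -- T is continuous.
  have hTcont : Continuous T := by
    have : LipschitzWith 1 T := LipschitzWith.of_dist_le_mul (fun x y => by simpa using hne x y)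
    exact this.continuous
  -- Every orbit converges to a fixed point.
  have hlim : ∀ x : X, ∃ w : X, T w = w ∧ Tendsto (fun n => T^[n] x) atTop (𝓝 w) := by
    intro x
    obtain ⟨w, hw⟩ := cauchySeq_tendsto_of_complete (hcauchy x)
    refine ⟨w, ?_, hw⟩
    have h1 : Tendsto (fun n => T (T^[n] x)) atTop (𝓝 (T w)) := (hTcont.tendsto w).comp hw
    have h2 : Tendsto (fun n => T (T^[n] x)) atTop (𝓝 w) := by
      have heq : (fun n => T (T^[n] x)) = fun n => T^[n+1] x := by
        funext n
        rw [Function.iterate_succ_apply']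
      rw [heq]
      exact hw.comp (tendsto_add_atTop_nat 1)
    exact tendsto_nhds_unique h1 h2
  obtain ⟨x₀⟩ := ‹Nonempty X›
  obtain ⟨u, hfixu, hu⟩ := hlim x₀
  have huniq : ∀ v : X, T v = v → v = u := by
    intro v hv
    by_contra hvu
    have := hcon v u hvu
    rw [hv, hfixu] at this
    exact lt_irrefl _ this
  refine ⟨u, hfixu, huniq, fun x => ?_⟩
  obtain ⟨w, hwfix, hwt⟩ := hlim x
  rwa [huniq w hwfix] at hwt
end

section
/- Let (X,d) be a metric space, T : X → X a CJMP-contraction, and x ∈ X. Set x_n = T^n x and a_n = d(x_n, x_{n+1}). If a_n > 0 for all n ∈ ℕ, then a_n → 0 as n → ∞. -/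
open Filter Topology

theorem stmt_19 {X : Type*} [MetricSpace X] (T : X → X) (hT : IsCJMP T) (x : X)
    (hpos : ∀ n : ℕ, 0 < dist (T^[n] x) (T^[n+1] x)) :
    Tendsto (fun n : ℕ => dist (T^[n] x) (T^[n+1] x)) atTop (𝓝 0) := by
  obtain ⟨hC, hMW⟩ := hT
  set a : ℕ → ℝ := fun n => dist (T^[n] x) (T^[n+1] x) with ha
  have hstep : ∀ n, a (n+1) < a n := by
    intro n
    have hne : T^[n] x ≠ T^[n+1] x := by
      intro h
      exact (hpos n).ne' (by simp [a, dist_eq_zero, h])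
    have := hC (T^[n] x) (T^[n+1] x) hne
    simpa [a, Function.iterate_succ_apply'] using this
  have hanti : Antitone a := antitone_nat_of_succ_le fun n => (hstep n).le
  have hbdd : BddBelow (Set.range a) := ⟨0, by rintro _ ⟨n, rfl⟩; exact dist_nonneg⟩
  set L := ⨅ n, a n with hL
  have htend : Tendsto a atTop (𝓝 L) := tendsto_atTop_ciInf hanti hbdd
  have hLle : ∀ n, L ≤ a n := fun n => ciInf_le hbdd n
  have hLlt : ∀ n, L < a n := fun n => lt_of_le_of_lt (hLle (n+1)) (hstep n)
  have hL0 : 0 ≤ L := le_ciInf fun n => dist_nonneg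
  rcases hL0.lt_or_eq with hLpos | hLz
  · exfalso
    obtain ⟨δ, hδ, hMWd⟩ := hMW L hLpos
    obtain ⟨N, hN⟩ := (htend.eventually (gt_mem_nhds (lt_add_of_pos_right L hδ))).exists
    have h1 : a (N+1) ≤ L := by
      have := hMWd (T^[N] x) (T^[N+1] x) (hLlt N) hN
      simpa [a, Function.iterate_succ_apply'] using this
    exact absurd h1 (not_le.mpr (hLlt (N+1)))
  · rw [← hLz] at htend
    exact htend
end
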